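/- Let γ be a permutation word of Σ. Then for every word w over Σ and every k ∈ ℕ, ι(w) = k if and only if w ∼_k γ^k and w is not (k+1)-Simon congruent to γ^{k+1}. -/

import Mathlib

open List

section Defs

variable {α : Type*}

/-- A word `w` is `k`-universal if every word of length at most `k` is a subsequence of `w`. -/
def IsKUniversal [Fintype α] (k : ℕ) (w : List α) : Prop :=
  ∀ u : List α, u.length ≤ k → u.Sublist w

/-- The universality index `ι(w)`: the largest `k` such that `w` is `k`-universal. -/
noncomputable def univIndex [Fintype α] (w : List α) : ℕ :=
  sSup {k | IsKUniversal k w}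

/-- `c`-fold concatenation (power) of a word. -/
def wpow (u : List α) (c : ℕ) : List α := (List.replicate c u).flatten

/-- Auxiliary (fuelled) computation of the arch factorization: returns the list of
arches and the rest. Each arch is the shortest prefix of the remaining suffix
containing every letter of the alphabet. -/
noncomputable def archFactAux [Fintype α] [DecidableEq α] :
    ℕ → List α → List (List α) × List α
  | 0, w => ([], w)
  | fuel + 1, w =>
    if Finset.univ ⊆ w.toFinset then
      let n := sInf {n | Finset.univ ⊆ (w.take n).toFinset}
      let p := archFactAux fuel (w.drop n)
      (w.take n :: p.1, p.2)
    else ([], w)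

/-- The arch factorization of `w`: the list of arches together with the rest. -/
noncomputable def archFact [Fintype α] [DecidableEq α] (w : List α) :
    List (List α) × List α :=
  archFactAux w.length w

/-- `γ(w)`: the distinct letters of `w` in order of their first occurrence. -/
def gammaWord [DecidableEq α] (w : List α) : List α := w.reverse.dedup.reverse

/-- The suffix of `w` strictly after the first occurrence of the letter `a`. -/
def afterFirst [DecidableEq α] (a : α) (w : List α) : List α :=
  w.drop (w.idxOf a + 1)

/-- `ι_a(w)`: the universality index of the suffix of `w` after the first occurrence of `a`. -/
noncomputable def iotaLetter [Fintype α] [DecidableEq α] (a : α) (w : List α) : ℕ :=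
  univIndex (afterFirst a w)

/-- `R_a(w)`: the alphabet of the rest of the arch factorization of the suffix of `w`
after the first occurrence of `a`. -/
noncomputable def restLetter [Fintype α] [DecidableEq α] (a : α) (w : List α) : Finset α :=
  ((archFact (afterFirst a w)).2).toFinset

/-- `Subseq_k(w)`: the set of subsequences of `w` of length at most `k`. -/
def subseqK (k : ℕ) (w : List α) : Set (List α) :=
  {u | u.length ≤ k ∧ u.Sublist w}

/-- Simon's congruence `u ∼_k v`. -/
def SimonCongr (k : ℕ) (u v : List α) : Prop := subseqK k u = subseqK k v

/-- Applying a substitution `h` to a pattern: replace each variable occurrence by its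
image and leave terminal letters unchanged. -/
def applySub {X : Type*} (h : X → List α) (p : List (α ⊕ X)) : List α :=
  p.flatMap (Sum.elim (fun a => [a]) h)

/-- A permutation word of the alphabet: every letter occurs exactly once. -/
def IsPermWord [DecidableEq α] (γ : List α) : Prop :=
  ∀ a : α, γ.count a = 1

end Defs

/-! `γ^k` is `k`-universal, because each of its `k` blocks contains every letter. Hence
`w ∼_k γ^k` says exactly that `w` is `k`-universal, and as `k`-universality is downward closed,
`ι(w) = k` iff `w` is `k`- but not `(k+1)`-universal. -/

section Universality

variable {α : Type*} [Fintype α]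

lemma isKUniversal_zero (w : List α) : IsKUniversal 0 w := by
  intro u hu
  rw [List.length_eq_zero_iff.mp (Nat.le_zero.mp hu)]
  exact List.nil_sublist w

lemma IsKUniversal.mono {j k : ℕ} {w : List α} (hjk : j ≤ k) (h : IsKUniversal k w) :
    IsKUniversal j w :=
  fun u hu => h u (hu.trans hjk)

lemma IsKUniversal.le_length [Nonempty α] {k : ℕ} {w : List α} (h : IsKUniversal k w) :
    k ≤ w.length := by
  obtain ⟨a⟩ := ‹Nonempty α›
  simpa using (h (List.replicate k a) (by simp)).length_le

lemma isKUniversal_iff_le_univIndex [Nonempty α] {k : ℕ} {w : List α} :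
    IsKUniversal k w ↔ k ≤ univIndex w := by
  have hbdd : BddAbove {n | IsKUniversal n w} := ⟨w.length, fun _ hn => hn.le_length⟩
  have hmem : univIndex w ∈ {n | IsKUniversal n w} := Nat.sSup_mem ⟨0, isKUniversal_zero w⟩ hbdd
  exact ⟨fun h => le_csSup hbdd h, fun h => IsKUniversal.mono h hmem⟩

lemma univIndex_eq_iff [Nonempty α] {k : ℕ} {w : List α} :
    univIndex w = k ↔ IsKUniversal k w ∧ ¬ IsKUniversal (k + 1) w := by
  rw [isKUniversal_iff_le_univIndex, isKUniversal_iff_le_univIndex]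
  omega

lemma simonCongr_iff_of_isKUniversal {k : ℕ} {w v : List α} (hv : IsKUniversal k v) :
    SimonCongr k w v ↔ IsKUniversal k w := by
  refine ⟨fun h u hu => ?_, fun hw => ?_⟩
  · have hu' : u ∈ subseqK k v := ⟨hu, hv u hu⟩
    rw [← h] at hu'
    exact hu'.2
  · ext u
    exact ⟨fun hu => ⟨hu.1, hv u hu.1⟩, fun hu => ⟨hu.1, hw u hu.1⟩⟩

end Universality

lemma wpow_succ {α : Type*} (u : List α) (n : ℕ) : wpow u (n + 1) = u ++ wpow u n := by
  simp [wpow, List.replicate_succ]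

lemma IsPermWord.mem {α : Type*} [DecidableEq α] {γ : List α} (hγ : IsPermWord γ) (a : α) :
    a ∈ γ :=
  List.count_pos_iff.mp (by rw [hγ a]; exact Nat.one_pos)

lemma isKUniversal_wpow {α : Type*} [Fintype α] [DecidableEq α] {γ : List α}
    (hγ : IsPermWord γ) (k : ℕ) : IsKUniversal k (wpow γ k) := by
  induction k with
  | zero => exact isKUniversal_zero _
  | succ n ih =>
    rw [wpow_succ]
    rintro (_ | ⟨a, t⟩) hu
    · exact List.nil_sublist _
    · exact (List.singleton_sublist.mpr (hγ.mem a)).append (ih t (by simpa using hu))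

/-- `ι(w) = k` iff `w ∼_k γ^k` and `w` is not `(k+1)`-Simon congruent to
`γ^(k+1)`, for a permutation word `γ` of `Σ`. -/
theorem stmt13 {α : Type*} [Fintype α] [DecidableEq α] [Nonempty α]
    (γ : List α) (hγ : IsPermWord γ) (w : List α) (k : ℕ) :
    univIndex w = k ↔
      (SimonCongr k w (wpow γ k) ∧ ¬ SimonCongr (k + 1) w (wpow γ (k + 1))) := by
  rw [simonCongr_iff_of_isKUniversal (isKUniversal_wpow hγ k),
    simonCongr_iff_of_isKUniversal (isKUniversal_wpow hγ (k + 1)), univIndex_eq_iff]
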